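/- Two infinite types are coinductively equivalent if and only if all their finite truncations are: (∀k ∈ ℕ, cut(A,k) ≈_T cut(B,k)) ↔ A ≈_T B. -/

import Mathlib

namespace CAP

/-- μ-types: variables, constants, compounds D @ A, functions A ⊃ B, unions A ⊕ B, recursive μV.A -/
inductive MuTy : Type
  | tvar : ℕ → MuTy
  | tconst : ℕ → MuTy
  | comp : MuTy → MuTy → MuTy
  | arr : MuTy → MuTy → MuTy
  | union : MuTy → MuTy → MuTy
  | mu : ℕ → MuTy → MuTy
  deriving DecidableEq

namespace MuTy

/-- substitution of `B` for variable `V` -/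
def subst (V : ℕ) (B : MuTy) : MuTy → MuTy
  | tvar n => if n = V then B else tvar n
  | tconst c => tconst c
  | comp A₁ A₂ => comp (subst V B A₁) (subst V B A₂)
  | arr A₁ A₂ => arr (subst V B A₁) (subst V B A₂)
  | union A₁ A₂ => union (subst V B A₁) (subst V B A₂)
  | mu W A => if W = V then mu W A else mu W (subst V B A)

/-- `V` occurs in the type only under `comp` or `arr` (if at all) -/
def Guarded (V : ℕ) : MuTy → Prop
  | tvar n => n ≠ V
  | tconst _ => True
  | comp _ _ => True
  | arr _ _ => True
  | union A₁ A₂ => Guarded V A₁ ∧ Guarded V A₂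
  | mu W A => W = V ∨ Guarded V A

/-- contractive μ-types -/
def Contractive : MuTy → Prop
  | tvar _ => True
  | tconst _ => True
  | comp A₁ A₂ => Contractive A₁ ∧ Contractive A₂
  | arr A₁ A₂ => Contractive A₁ ∧ Contractive A₂
  | union A₁ A₂ => Contractive A₁ ∧ Contractive A₂
  | mu V A => Guarded V A ∧ Contractive A

/-- free variables -/
def fv : MuTy → Set ℕ
  | tvar n => {n}
  | tconst _ => ∅
  | comp A₁ A₂ => fv A₁ ∪ fv A₂
  | arr A₁ A₂ => fv A₁ ∪ fv A₂
  | union A₁ A₂ => fv A₁ ∪ fv A₂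
  | mu V A => fv A \ {V}

/-- number of consecutive μ binders at the root -/
def headMu : MuTy → ℕ
  | mu _ A => headMu A + 1
  | _ => 0

end MuTy

/-- inductive μ-type equivalence ≈ -/
inductive MuEq : MuTy → MuTy → Prop
  | refl (A) : MuEq A A
  | trans : MuEq A B → MuEq B C → MuEq A C
  | symm : MuEq A B → MuEq B A
  | arrCong : MuEq A A' → MuEq B B' → MuEq (.arr A B) (.arr A' B')
  | compCong : MuEq D D' → MuEq A A' → MuEq (.comp D A) (.comp D' A')
  | unionIdem (A) : MuEq (.union A A) A
  | unionComm (A B) : MuEq (.union A B) (.union B A)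
  | unionAssoc (A B C) : MuEq (.union A (.union B C)) (.union (.union A B) C)
  | unionCong : MuEq A A' → MuEq B B' → MuEq (.union A B) (.union A' B')
  | muCong : MuEq A B → MuEq (.mu V A) (.mu V B)
  | fold (V A) : MuEq (.mu V A) (MuTy.subst V (.mu V A) A)
  | contr : MuEq A (MuTy.subst V A B) → (MuTy.mu V B).Contractive → MuEq A (.mu V B)

/-- inductive μ-type subtyping, with a context of variable assumptions -/
inductive MuLe : Set (ℕ × ℕ) → MuTy → MuTy → Prop
  | refl (S A) : MuLe S A A
  | hyp : (V, W) ∈ S → MuLe S (.tvar V) (.tvar W)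
  | eq : MuEq A B → MuLe S A B
  | trans : MuLe S A B → MuLe S B C → MuLe S A C
  | compCong : MuLe S D D' → MuLe S A A' → MuLe S (.comp D A) (.comp D' A')
  | func : MuLe S A' A → MuLe S B B' → MuLe S (.arr A B) (.arr A' B')
  | unionL : MuLe S A C → MuLe S B C → MuLe S (.union A B) C
  | unionR1 : MuLe S A B → MuLe S A (.union B C)
  | unionR2 : MuLe S A C → MuLe S A (.union B C)
  | recRule : MuLe (insert (V, W) S) A B → W ∉ A.fv → V ∉ B.fv →
      MuLe S (.mu V A) (.mu W B)

/-- binary association trees of unions, used to express n-fold unions with arbitrary association -/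
inductive UTree : Type
  | leaf : MuTy → UTree
  | node : UTree → UTree → UTree

def UTree.toTy : UTree → MuTy
  | .leaf A => A
  | .node l r => .union l.toTy r.toTy

def UTree.leaves : UTree → List MuTy
  | .leaf A => [A]
  | .node l r => l.leaves ++ r.leaves

/-! ## Infinite types as trees -/

inductive Atom : Type
  | var : ℕ → Atom
  | const : ℕ → Atom
  | bullet : Atom
  deriving DecidableEq

inductive Lab : Type
  | atom : Atom → Lab
  | comp : Lab
  | arr : Lab
  | union : Lab
  deriving DecidableEq

def Lab.IsBinary : Lab → Prop
  | .comp => True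
  | .arr => True
  | .union => True
  | .atom _ => False

/-- possibly infinite trees: partial labelling of positions -/
abbrev ITree : Type := List Bool → Option Lab

namespace ITree

def child (A : ITree) (b : Bool) : ITree := fun π => A (b :: π)

/-- well-formed infinite types: rooted, prefix-closed with binary branching,
and no infinite branch consisting solely of ⊕ -/
def Wf (A : ITree) : Prop :=
  (A []).isSome ∧
  (∀ π b, (A (π ++ [b])).isSome ↔ ∃ l, A π = some l ∧ l.IsBinary) ∧
  (∀ (π : List Bool) (f : ℕ → Bool), ∃ n, A (π ++ (List.range n).map f) ≠ some Lab.union)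

end ITree

/-- maximal union decomposition: the list of non-union components of a tree -/
inductive UnionComps : ITree → List ITree → Prop
  | nonUnion (A : ITree) : A [] ≠ some Lab.union → UnionComps A [A]
  | union (A : ITree) (l r : List ITree) :
      A [] = some Lab.union →
      UnionComps (A.child false) l → UnionComps (A.child true) r →
      UnionComps A (l ++ r)

/-- the rule functional for coinductive tree equivalence -/
def EqF (R : ITree → ITree → Prop) (A B : ITree) : Prop :=
  (∃ a : Atom, A [] = some (Lab.atom a) ∧ B [] = some (Lab.atom a)) ∨
  (A [] = some Lab.comp ∧ B [] = some Lab.comp ∧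
    R (A.child false) (B.child false) ∧ R (A.child true) (B.child true)) ∨
  (A [] = some Lab.arr ∧ B [] = some Lab.arr ∧
    R (A.child false) (B.child false) ∧ R (A.child true) (B.child true)) ∨
  (∃ (la lb : List ITree), UnionComps A la ∧ UnionComps B lb ∧
    2 < la.length + lb.length ∧
    (∃ f : Fin la.length → Fin lb.length, ∀ i, R (la.get i) (lb.get (f i))) ∧
    (∃ g : Fin lb.length → Fin la.length, ∀ j, R (la.get (g j)) (lb.get j)))

/-- coinductive tree equivalence ≈_T : the greatest fixed point of `EqF` -/
def TreeEq (A B : ITree) : Prop :=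
  ∃ R : ITree → ITree → Prop, (∀ X Y, R X Y → EqF R X Y) ∧ R A B

/-- the rule functional for coinductive tree subtyping -/
def LeF (R : ITree → ITree → Prop) (A B : ITree) : Prop :=
  (∃ a : Atom, A [] = some (Lab.atom a) ∧ B [] = some (Lab.atom a)) ∨
  (A [] = some Lab.comp ∧ B [] = some Lab.comp ∧
    R (A.child false) (B.child false) ∧ R (A.child true) (B.child true)) ∨
  (A [] = some Lab.arr ∧ B [] = some Lab.arr ∧
    R (B.child false) (A.child false) ∧ R (A.child true) (B.child true)) ∨
  (∃ (la lb : List ITree), UnionComps A la ∧ UnionComps B lb ∧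
    2 < la.length + lb.length ∧
    (∃ f : Fin la.length → Fin lb.length, ∀ i, R (la.get i) (lb.get (f i))))

/-- coinductive tree subtyping ≤_T : the greatest fixed point of `LeF` -/
def TreeLe (A B : ITree) : Prop :=
  ∃ R : ITree → ITree → Prop, (∀ X Y, R X Y → LeF R X Y) ∧ R A B

open Classical in
/-- tree substitution of tree `B` for the variable `V` -/
noncomputable def substT (V : ℕ) (B A : ITree) : ITree := fun π =>
  if h : ∃ ps : List Bool × List Bool,
      π = ps.1 ++ ps.2 ∧ A ps.1 = some (Lab.atom (Atom.var V))
  then B (Classical.choose h).2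
  else A π

/-- the single-node tree consisting of an atom -/
def atomTree (a : Atom) : ITree := fun π => if π = [] then some (Lab.atom a) else none

/-- a tree with binary root label `l` and subtrees `A₁`, `A₂` -/
def binTree (l : Lab) (A₁ A₂ : ITree) : ITree := fun π =>
  match π with
  | [] => some l
  | false :: π' => A₁ π'
  | true :: π' => A₂ π'

/-- effective depth of a position: union nodes do not consume depth -/
def edepth (A : ITree) : List Bool → ℕ
  | [] => 0
  | b :: π => (if A [] = some Lab.union then 0 else 1) + edepth (A.child b) π

open Classical in
/-- truncation of a tree at depth `k`; cut points are replaced by the constant • -/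
noncomputable def cut (k : ℕ) (A : ITree) : ITree := fun π =>
  if ∀ p, p <+: π → p ≠ π → edepth A p < k then
    (if edepth A π < k then A π
     else if (A π).isSome then some (Lab.atom Atom.bullet) else none)
  else none

/-- labels of the tree interpretation of a μ-type (μ is unfolded completely) -/
inductive HasLab : MuTy → List Bool → Lab → Prop
  | tvar (n) : HasLab (.tvar n) [] (.atom (.var n))
  | tconst (c) : HasLab (.tconst c) [] (.atom (.const c))
  | compRoot (A B) : HasLab (.comp A B) [] .comp
  | compL : HasLab A π l → HasLab (.comp A B) (false :: π) l
  | compR : HasLab B π l → HasLab (.comp A B) (true :: π) l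
  | arrRoot (A B) : HasLab (.arr A B) [] .arr
  | arrL : HasLab A π l → HasLab (.arr A B) (false :: π) l
  | arrR : HasLab B π l → HasLab (.arr A B) (true :: π) l
  | unionRoot (A B) : HasLab (.union A B) [] .union
  | unionL : HasLab A π l → HasLab (.union A B) (false :: π) l
  | unionR : HasLab B π l → HasLab (.union A B) (true :: π) l
  | mu : HasLab (MuTy.subst V (.mu V A) A) π l → HasLab (.mu V A) π l

open Classical in
/-- the tree interpretation ⟦·⟧ of μ-types -/
noncomputable def interp (A : MuTy) : ITree := fun π =>
  if h : ∃ l, HasLab A π l then some (Classical.choose h) else none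

/-- application of a parallel substitution to a μ-type -/
def applyS (σ : ℕ → MuTy) : MuTy → MuTy
  | .tvar n => σ n
  | .tconst c => .tconst c
  | .comp A B => .comp (applyS σ A) (applyS σ B)
  | .arr A B => .arr (applyS σ A) (applyS σ B)
  | .union A B => .union (applyS σ A) (applyS σ B)
  | .mu V A => .mu V (applyS (Function.update σ V (.tvar V)) A)

/-- outermost type constructor (head μ binders are unfolded/skipped) -/
inductive HeadC : Type
  | hvar : ℕ → HeadC
  | hconst : ℕ → HeadC
  | hcomp : HeadC
  | harr : HeadC
  | hunion : HeadC
  deriving DecidableEq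

def headOf : MuTy → HeadC
  | .tvar n => .hvar n
  | .tconst c => .hconst c
  | .comp _ _ => .hcomp
  | .arr _ _ => .harr
  | .union _ _ => .hunion
  | .mu _ A => headOf A

/-- non-union μ-types: after unfolding head μ binders the top constructor is not ⊕ -/
def NonUnion : MuTy → Prop
  | .union _ _ => False
  | .mu _ A => NonUnion A
  | _ => True

/-- union contexts U ::= □ | U ⊕ A | A ⊕ U -/
inductive UCtx : Type
  | hole : UCtx
  | left : UCtx → MuTy → UCtx
  | right : MuTy → UCtx → UCtx

def UCtx.fill : UCtx → MuTy → MuTy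
  | .hole, A => A
  | .left U B, A => .union (U.fill A) B
  | .right B U, A => .union B (U.fill A)

end CAP

/-!
Off a union root, `cut (k + 1)` keeps the root label and truncates the children at depth `k`; at a
union root it keeps the depth, so it maps maximal union decompositions to maximal union
decompositions. Hence the pairs `(cut k U, cut k V)` with `U ≈_T V` form a bisimulation.

Conversely, for well-formed trees the pairs all of whose truncations are equivalent form a
bisimulation. At a non-union root the root labels agree at every depth. At a union root every
component `U` of one side is matched at each depth `k` with some component of the other side;
there are finitely many components and equivalence of truncations is antitone in `k`, so a single
component is matched at every depth. Well-formedness (no infinite union branch) is what makes the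
union decompositions exist.
-/

theorem List.forall_strictPrefix_cons_iff {α : Type*} {P : List α → Prop} {a : α}
    {l : List α} :
    (∀ p, p <+: a :: l → p ≠ a :: l → P p) ↔ P [] ∧ ∀ p, p <+: l → p ≠ l → P (a :: p) := by
  constructor
  · intro h
    exact ⟨h [] List.nil_prefix (List.cons_ne_nil _ _).symm,
      fun p hp hne => h _ ((List.prefix_cons_inj a).2 hp) (by simpa using hne)⟩
  · rintro ⟨h₀, h⟩ p hp hne
    rcases List.prefix_cons_iff.1 hp with rfl | ⟨t, rfl, ht⟩
    · exact h₀
    · exact h t ht (by simpa using hne)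

theorem List.exists_fin_forall_get_iff {α β : Type*} {la : List α} {lb : List β}
    {R : α → β → Prop} :
    (∃ f : Fin la.length → Fin lb.length, ∀ i, R (la.get i) (lb.get (f i))) ↔
      ∀ a ∈ la, ∃ b ∈ lb, R a b := by
  constructor
  · rintro ⟨f, hf⟩ a ha
    obtain ⟨i, rfl⟩ := List.mem_iff_get.1 ha
    exact ⟨_, List.get_mem _ _, hf i⟩
  · intro h
    have : ∀ i, ∃ j, R (la.get i) (lb.get j) := fun i => by
      obtain ⟨b, hb, hR⟩ := h _ (List.get_mem _ _)
      obtain ⟨j, rfl⟩ := List.mem_iff_get.1 hb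
      exact ⟨j, hR⟩
    choose f hf using this
    exact ⟨f, hf⟩

theorem List.exists_mem_forall_of_antitone {α : Type*} {s : List α} {P : ℕ → α → Prop}
    (hP : ∀ a, Antitone fun k => P k a) (h : ∀ k, ∃ a ∈ s, P k a) : ∃ a ∈ s, ∀ k, P k a := by
  by_contra! hs
  choose! K hK using hs
  obtain ⟨a, ha, hPa⟩ := h (s.map K).sum
  exact hK a ha (hP a (List.le_sum_of_mem (List.mem_map_of_mem ha)) hPa)

namespace CAP

section Cut

variable {A : ITree} {k : ℕ}

theorem cut_zero_nil (A : ITree) :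
    cut 0 A [] = if (A []).isSome then some (Lab.atom Atom.bullet) else none := by
  simp [cut, edepth]

theorem cut_zero_cons (A : ITree) (b : Bool) (π : List Bool) : cut 0 A (b :: π) = none := by
  simp only [cut]
  rw [if_neg]
  intro h
  simpa [edepth] using (List.forall_strictPrefix_cons_iff.1 h).1

theorem cut_succ_nil (k : ℕ) (A : ITree) : cut (k + 1) A [] = A [] := by
  simp [cut, edepth]

theorem cut_succ_cons (k : ℕ) (A : ITree) (b : Bool) (π : List Bool) :
    cut (k + 1) A (b :: π) =
      cut (k + 1 - if A [] = some Lab.union then 0 else 1) (A.child b) π := by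
  have hlt : ∀ p, edepth A (b :: p) < k + 1 ↔
      edepth (A.child b) p < k + 1 - if A [] = some Lab.union then 0 else 1 := by
    intro p
    simp only [edepth]
    split_ifs <;> omega
  have hcond : (∀ p, p <+: b :: π → p ≠ b :: π → edepth A p < k + 1) ↔
      ∀ p, p <+: π → p ≠ π →
        edepth (A.child b) p < k + 1 - if A [] = some Lab.union then 0 else 1 := by
    rw [List.forall_strictPrefix_cons_iff, and_iff_right (show edepth A [] < k + 1 from k.succ_pos)]
    exact forall_congr' fun p => imp_congr_right fun _ => imp_congr_right fun _ => hlt p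
  classical
  exact ite_congr (propext hcond)
    (fun _ => ite_congr (propext (hlt π)) (fun _ => rfl) (fun _ => rfl)) (fun _ => rfl)

theorem child_cut_of_union (hA : A [] = some Lab.union) (b : Bool) :
    (cut (k + 1) A).child b = cut (k + 1) (A.child b) := by
  funext π
  simp [ITree.child, cut_succ_cons, hA]

theorem child_cut_of_not_union (hA : A [] ≠ some Lab.union) (b : Bool) :
    (cut (k + 1) A).child b = cut k (A.child b) := by
  funext π
  simp [ITree.child, cut_succ_cons, hA]

theorem cut_cut {k k' : ℕ} (hk : k ≤ k') (A : ITree) : cut k (cut k' A) = cut k A := by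
  funext π
  induction π generalizing A k k' with
  | nil =>
    rcases k with _ | k
    · rcases k' with _ | k' <;> simp [cut_zero_nil, cut_succ_nil]
    · obtain ⟨k', rfl⟩ : ∃ j, k' = j + 1 := ⟨k' - 1, by omega⟩
      simp [cut_succ_nil]
  | cons b π ih =>
    rcases k with _ | k
    · simp only [cut_zero_cons]
    · obtain ⟨k', rfl⟩ : ∃ j, k' = j + 1 := ⟨k' - 1, by omega⟩
      change (cut (k + 1) (cut (k' + 1) A)).child b π = (cut (k + 1) A).child b π
      by_cases hA : A [] = some Lab.union
      · rw [child_cut_of_union (by rwa [cut_succ_nil]), child_cut_of_union hA,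
          child_cut_of_union hA, ih hk]
      · rw [child_cut_of_not_union (by rwa [cut_succ_nil]), child_cut_of_not_union hA,
          child_cut_of_not_union hA, ih (by omega)]

end Cut

namespace UnionComps

variable {A : ITree} {l : List ITree}

theorem length_pos (h : UnionComps A l) : 0 < l.length := by
  induction h with
  | nonUnion => simp
  | union _ _ _ _ _ _ ihl => simp only [List.length_append]; omega

theorem eq_singleton (h : UnionComps A l) (hA : A [] ≠ some Lab.union) : l = [A] := by
  cases h with
  | nonUnion => rfl
  | union _ _ _ hA' => exact absurd hA' hA

theorem two_le_length (h : UnionComps A l) (hA : A [] = some Lab.union) : 2 ≤ l.length := by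
  cases h with
  | nonUnion _ hA' => exact absurd hA hA'
  | union _ _ _ _ hl hr =>
    have := hl.length_pos
    have := hr.length_pos
    simp only [List.length_append]
    omega

theorem root_ne_union (h : UnionComps A l) : ∀ X ∈ l, X [] ≠ some Lab.union := by
  induction h with
  | nonUnion _ hA => simpa using hA
  | union _ _ _ _ _ _ ihl ihr => simpa [or_imp, forall_and] using ⟨ihl, ihr⟩

theorem unique {l' : List ITree} (h : UnionComps A l) (h' : UnionComps A l') : l = l' := by
  induction h generalizing l' with
  | nonUnion _ hA => exact (h'.eq_singleton hA).symm
  | union _ _ _ hA _ _ ihl ihr =>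
    cases h' with
    | nonUnion _ hA' => exact absurd hA hA'
    | union _ _ _ _ hl' hr' => rw [ihl hl', ihr hr']

theorem cut_succ (h : UnionComps A l) (k : ℕ) :
    UnionComps (cut (k + 1) A) (l.map (cut (k + 1))) := by
  induction h with
  | nonUnion _ hA => exact .nonUnion _ (by rwa [cut_succ_nil])
  | union _ _ _ hA _ _ ihl ihr =>
    rw [List.map_append]
    exact .union _ _ _ (by rwa [cut_succ_nil]) (by rwa [child_cut_of_union hA])
      (by rwa [child_cut_of_union hA])

end UnionComps

section EqF

variable {R : ITree → ITree → Prop} {X Y : ITree}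

theorem EqF.mono {S : ITree → ITree → Prop} (hRS : ∀ U V, R U V → S U V) :
    EqF R X Y → EqF S X Y := by
  rintro (hatom | ⟨hX, hY, h₀, h₁⟩ | ⟨hX, hY, h₀, h₁⟩ | ⟨la, lb, hla, hlb, hlen, ⟨f, hf⟩, ⟨g, hg⟩⟩)
  · exact Or.inl hatom
  · exact Or.inr (Or.inl ⟨hX, hY, hRS _ _ h₀, hRS _ _ h₁⟩)
  · exact Or.inr (Or.inr (Or.inl ⟨hX, hY, hRS _ _ h₀, hRS _ _ h₁⟩))
  · exact Or.inr (Or.inr (Or.inr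
      ⟨la, lb, hla, hlb, hlen, ⟨f, fun i => hRS _ _ (hf i)⟩, ⟨g, fun j => hRS _ _ (hg j)⟩⟩))

theorem eqF_iff_of_not_union (hX : X [] ≠ some Lab.union) (hY : Y [] ≠ some Lab.union) :
    EqF R X Y ↔ ∃ l, X [] = some l ∧ Y [] = some l ∧
      (l.IsBinary → ∀ b, R (X.child b) (Y.child b)) := by
  constructor
  · rintro (⟨a, hXa, hYa⟩ | ⟨hXl, hYl, hR⟩ | ⟨hXl, hYl, hR⟩ | ⟨la, lb, hla, hlb, hlen, -⟩)
    · exact ⟨_, hXa, hYa, fun h => h.elim⟩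
    · exact ⟨_, hXl, hYl, fun _ => Bool.forall_bool.2 hR⟩
    · exact ⟨_, hXl, hYl, fun _ => Bool.forall_bool.2 hR⟩
    · rw [hla.eq_singleton hX, hlb.eq_singleton hY] at hlen
      simp at hlen
  · rintro ⟨l, hXl, hYl, hR⟩
    cases l with
    | atom a => exact Or.inl ⟨a, hXl, hYl⟩
    | comp => exact Or.inr (Or.inl ⟨hXl, hYl, Bool.forall_bool.1 (hR trivial)⟩)
    | arr => exact Or.inr (Or.inr (Or.inl ⟨hXl, hYl, Bool.forall_bool.1 (hR trivial)⟩))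
    | union => exact absurd hXl hX

theorem eqF_iff_of_union (h : X [] = some Lab.union ∨ Y [] = some Lab.union) :
    EqF R X Y ↔ ∃ la lb, UnionComps X la ∧ UnionComps Y lb ∧
      (∀ U ∈ la, ∃ V ∈ lb, R U V) ∧ ∀ V ∈ lb, ∃ U ∈ la, R U V := by
  constructor
  · rintro (⟨a, hX, hY⟩ | ⟨hX, hY, -⟩ | ⟨hX, hY, -⟩ | ⟨la, lb, hla, hlb, -, hab, hba⟩)
    iterate 3 rcases h with h | h <;> simp_all
    exact ⟨la, lb, hla, hlb, List.exists_fin_forall_get_iff.1 hab,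
      List.exists_fin_forall_get_iff (R := fun V U => R U V) |>.1 hba⟩
  · rintro ⟨la, lb, hla, hlb, hab, hba⟩
    refine Or.inr (Or.inr (Or.inr ⟨la, lb, hla, hlb, ?_, List.exists_fin_forall_get_iff.2 hab,
      List.exists_fin_forall_get_iff (R := fun V U => R U V) |>.2 hba⟩))
    have := hla.length_pos
    have := hlb.length_pos
    rcases h with h | h
    · have := hla.two_le_length h; omega
    · have := hlb.two_le_length h; omega

end EqF

namespace TreeEq

variable {X Y : ITree}

theorem dest (h : TreeEq X Y) : EqF TreeEq X Y := by
  obtain ⟨R, hR, hXY⟩ := h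
  exact (hR _ _ hXY).mono fun U V hUV => ⟨R, hR, hUV⟩

theorem symm (h : TreeEq X Y) : TreeEq Y X := by
  refine ⟨fun U V => TreeEq V U, fun U V hVU => ?_, h⟩
  rcases hVU.dest with (⟨a, hV, hU⟩ | ⟨hV, hU, h₀, h₁⟩ | ⟨hV, hU, h₀, h₁⟩ |
    ⟨lb, la, hlb, hla, hlen, hf, hg⟩)
  · exact Or.inl ⟨a, hU, hV⟩
  · exact Or.inr (Or.inl ⟨hU, hV, h₀, h₁⟩)
  · exact Or.inr (Or.inr (Or.inl ⟨hU, hV, h₀, h₁⟩))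
  · exact Or.inr (Or.inr (Or.inr ⟨la, lb, hla, hlb, by omega, hg, hf⟩))

theorem isSome_left (h : TreeEq X Y) : (X []).isSome := by
  by_cases hX : X [] = some Lab.union
  · simp [hX]
  by_cases hY : Y [] = some Lab.union
  · obtain ⟨la, lb, hla, hlb, hab, -⟩ := (eqF_iff_of_union (Or.inr hY)).1 h.dest
    obtain ⟨V, hV, hXV⟩ := hab X (by simp [hla.eq_singleton hX])
    obtain ⟨l, hl, -⟩ := (eqF_iff_of_not_union hX (hlb.root_ne_union V hV)).1 hXV.dest
    simp [hl]
  · obtain ⟨l, hl, -⟩ := (eqF_iff_of_not_union hX hY).1 h.dest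
    simp [hl]

theorem isSome_right (h : TreeEq X Y) : (Y []).isSome :=
  h.symm.isSome_left

end TreeEq

theorem treeEq_cut {U V : ITree} (h : TreeEq U V) (k : ℕ) : TreeEq (cut k U) (cut k V) := by
  refine ⟨fun X Y => ∃ k U V, X = cut k U ∧ Y = cut k V ∧ TreeEq U V, ?_, k, U, V, rfl, rfl, h⟩
  rintro _ _ ⟨_ | k, U, V, rfl, rfl, hUV⟩
  · exact Or.inl ⟨Atom.bullet, by simp [cut_zero_nil, hUV.isSome_left],
      by simp [cut_zero_nil, hUV.isSome_right]⟩
  by_cases hu : U [] = some Lab.union ∨ V [] = some Lab.union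
  · obtain ⟨la, lb, hla, hlb, hab, hba⟩ := (eqF_iff_of_union hu).1 hUV.dest
    refine (eqF_iff_of_union (by simpa only [cut_succ_nil])).2
      ⟨_, _, hla.cut_succ k, hlb.cut_succ k, ?_, ?_⟩
    · simp only [List.forall_mem_map]
      intro X hX
      obtain ⟨Y, hY, hXY⟩ := hab X hX
      exact ⟨_, List.mem_map_of_mem hY, k + 1, X, Y, rfl, rfl, hXY⟩
    · simp only [List.forall_mem_map]
      intro Y hY
      obtain ⟨X, hX, hXY⟩ := hba Y hY
      exact ⟨_, List.mem_map_of_mem hX, k + 1, X, Y, rfl, rfl, hXY⟩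
  · push Not at hu
    obtain ⟨l, hUl, hVl, hR⟩ := (eqF_iff_of_not_union hu.1 hu.2).1 hUV.dest
    refine (eqF_iff_of_not_union (by rw [cut_succ_nil]; exact hu.1)
      (by rw [cut_succ_nil]; exact hu.2)).2
      ⟨l, by rw [cut_succ_nil, hUl], by rw [cut_succ_nil, hVl], fun hl b => ?_⟩
    rw [child_cut_of_not_union hu.1, child_cut_of_not_union hu.2]
    exact ⟨k, _, _, rfl, rfl, hR hl b⟩

theorem antitone_treeEq_cut (U V : ITree) : Antitone fun k => TreeEq (cut k U) (cut k V) :=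
  fun k k' hk hUV => by simpa only [cut_cut hk] using treeEq_cut hUV k

section Wf

variable {A : ITree}

theorem ITree.Wf.child (hA : A.Wf) {l : Lab} (hl : A [] = some l) (hb : l.IsBinary) (b : Bool) :
    (A.child b).Wf := by
  refine ⟨?_, fun π c => ?_, fun π f => ?_⟩
  · simpa [ITree.child] using (hA.2.1 [] b).2 ⟨l, hl, hb⟩
  · simpa [ITree.child] using hA.2.1 (b :: π) c
  · simpa [ITree.child] using hA.2.2 (b :: π) f

theorem UnionComps.wf {l : List ITree} (h : UnionComps A l) (hA : A.Wf) : ∀ X ∈ l, X.Wf := by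
  induction h with
  | nonUnion => simpa using hA
  | union _ _ _ hu _ _ ihl ihr =>
    simpa [or_imp, forall_and] using ⟨ihl (hA.child hu trivial _), ihr (hA.child hu trivial _)⟩

theorem ITree.Wf.exists_unionComps (hA : A.Wf) : ∃ l, UnionComps A l := by
  by_contra hA'
  have step : ∀ X : ITree, (¬∃ l, UnionComps X l) →
      X [] = some Lab.union ∧ ∃ b, ¬∃ l, UnionComps (X.child b) l := by
    intro X hX
    have hXu : X [] = some Lab.union := by
      by_contra h
      exact hX ⟨_, .nonUnion X h⟩
    refine ⟨hXu, ?_⟩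
    by_contra! h
    obtain ⟨l, hl⟩ := h false
    obtain ⟨r, hr⟩ := h true
    exact hX ⟨_, .union X l r hXu hl hr⟩
  choose! hroot next hnext using step
  obtain ⟨X, hX0, hXsucc⟩ : ∃ X : ℕ → ITree, X 0 = A ∧ ∀ n, X (n + 1) = (X n).child (next (X n)) :=
    ⟨fun n => Nat.rec A (fun _ Y => Y.child (next Y)) n, rfl, fun _ => rfl⟩
  have hbad : ∀ n, ¬∃ l, UnionComps (X n) l := by
    intro n
    induction n with
    | zero => rwa [hX0]
    | succ n ih => rw [hXsucc]; exact hnext _ ih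
  have hpath : ∀ n π, X n π = A ((List.range n).map (fun i => next (X i)) ++ π) := by
    intro n
    induction n with
    | zero => simp [hX0]
    | succ n ih =>
      intro π
      rw [hXsucc, ITree.child, ih, List.range_succ, List.map_append, List.append_assoc]
      rfl
  obtain ⟨n, hn⟩ := hA.2.2 [] fun i => next (X i)
  exact hn (by simpa [hpath] using hroot _ (hbad n))

end Wf

theorem eqF_of_forall_treeEq_cut {X Y : ITree} (hX : X.Wf) (hY : Y.Wf)
    (h : ∀ k, TreeEq (cut k X) (cut k Y)) :
    EqF (fun U V => U.Wf ∧ V.Wf ∧ ∀ k, TreeEq (cut k U) (cut k V)) X Y := by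
  by_cases hu : X [] = some Lab.union ∨ Y [] = some Lab.union
  · obtain ⟨la, hla⟩ := hX.exists_unionComps
    obtain ⟨lb, hlb⟩ := hY.exists_unionComps
    have hcut : ∀ k, (∀ U ∈ la, ∃ V ∈ lb, TreeEq (cut k U) (cut k V)) ∧
        ∀ V ∈ lb, ∃ U ∈ la, TreeEq (cut k U) (cut k V) := by
      intro k
      obtain ⟨la', lb', hla', hlb', hab, hba⟩ :=
        (eqF_iff_of_union (by simpa only [cut_succ_nil])).1 (h (k + 1)).dest
      obtain rfl := (hla.cut_succ k).unique hla'
      obtain rfl := (hlb.cut_succ k).unique hlb'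
      have hle := Nat.le_succ k
      refine ⟨fun U hU => ?_, fun V hV => ?_⟩
      · obtain ⟨_, hV', hUV⟩ := hab _ (List.mem_map_of_mem hU)
        obtain ⟨V, hV, rfl⟩ := List.mem_map.1 hV'
        exact ⟨V, hV, antitone_treeEq_cut U V hle hUV⟩
      · obtain ⟨_, hU', hUV⟩ := hba _ (List.mem_map_of_mem hV)
        obtain ⟨U, hU, rfl⟩ := List.mem_map.1 hU'
        exact ⟨U, hU, antitone_treeEq_cut U V hle hUV⟩
    refine (eqF_iff_of_union hu).2 ⟨la, lb, hla, hlb, fun U hU => ?_, fun V hV => ?_⟩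
    · obtain ⟨V, hV, hUV⟩ := List.exists_mem_forall_of_antitone
        (fun V => antitone_treeEq_cut U V) fun k => (hcut k).1 U hU
      exact ⟨V, hV, hla.wf hX U hU, hlb.wf hY V hV, hUV⟩
    · obtain ⟨U, hU, hUV⟩ := List.exists_mem_forall_of_antitone
        (fun U => antitone_treeEq_cut U V) fun k => (hcut k).2 V hV
      exact ⟨U, hU, hla.wf hX U hU, hlb.wf hY V hV, hUV⟩
  · push Not at hu
    have hlab : ∀ k, ∃ l, X [] = some l ∧ Y [] = some l ∧
        (l.IsBinary → ∀ b, TreeEq (cut k (X.child b)) (cut k (Y.child b))) := by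
      intro k
      have := (eqF_iff_of_not_union (by rw [cut_succ_nil]; exact hu.1)
        (by rw [cut_succ_nil]; exact hu.2)).1 (h (k + 1)).dest
      simpa only [cut_succ_nil, child_cut_of_not_union hu.1, child_cut_of_not_union hu.2]
        using this
    obtain ⟨l, hXl, hYl, -⟩ := hlab 0
    refine (eqF_iff_of_not_union hu.1 hu.2).2 ⟨l, hXl, hYl, fun hl b =>
      ⟨hX.child hXl hl b, hY.child hYl hl b, fun k => ?_⟩⟩
    obtain ⟨l', hXl', -, hk⟩ := hlab k
    obtain rfl : l = l' := Option.some_injective _ (hXl.symm.trans hXl')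
    exact hk hl b

/-- two infinite types are coinductively equivalent iff all their
finite truncations are. -/
theorem stmt10 (A B : ITree) (hA : A.Wf) (hB : B.Wf) :
    (∀ k : ℕ, TreeEq (cut k A) (cut k B)) ↔ TreeEq A B :=
  ⟨fun h => ⟨_, fun _ _ hXY => eqF_of_forall_treeEq_cut hXY.1 hXY.2.1 hXY.2.2, hA, hB, h⟩,
    fun h k => treeEq_cut h k⟩

end CAP
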